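/- arXiv:0907.3873 — 2 statements merged into one kernel-verified Lean document; each statement's English description precedes it below -/
import Mathlib

section
/- For each positive integer n, there is a list containing each binary partition of n exactly once, in which every two consecutive partitions differ by a single elementary move, whose first entry is the partition of n into n parts each equal to 1, and in which the partitions having at least one part equal to 1 form an initial segment of the list (all partitions containing a part 1 precede all partitions not containing a part 1). -/
/-- A binary partition: a multiset of parts, each a power of two. -/
def IsBinaryPartition (P : Multiset ℕ) : Prop := ∀ p ∈ P, ∃ k : ℕ, p = 2 ^ k

/-- `P` and `Q` differ by an elementary move: for some `k`, `Q` is obtained from `P`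
by removing two copies of `2^k` and adding one copy of `2^(k+1)`, or vice versa. -/
def ElementaryMove (P Q : Multiset ℕ) : Prop :=
  ∃ k : ℕ, Q + {2 ^ k, 2 ^ k} = P + {2 ^ (k + 1)} ∨ P + {2 ^ k, 2 ^ k} = Q + {2 ^ (k + 1)}

/-!
A binary partition of `n` with a part `1` is a binary partition of `n - 1` with a `1` added, and
for even `n = 2h` one without a part `1` is a binary partition of `h` with every part doubled;
both operations preserve elementary moves. So a Gray code for `n` is the code for `n - 1` with a
`1` added, followed, for even `n`, by the doubled code for `h`, run backwards when `h` is odd.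
Tracking the last entry of each code (`grayLast`) shows that this orientation turns the junction
into the single move `X + {1, 1} → X + {2}`.
-/

theorem Nat.induction_pred_half {motive : ℕ → Prop} (zero : motive 0)
    (odd : ∀ h, motive (2 * h) → motive (2 * h + 1))
    (even : ∀ h, motive (2 * h + 1) → motive (h + 1) → motive (2 * h + 2)) (n : ℕ) :
    motive n := by
  induction n using Nat.strong_induction_on with
  | _ n ih =>
    obtain ⟨h, rfl | rfl⟩ := Nat.even_or_odd' n
    · cases h with
      | zero => exact zero
      | succ h => exact even h (ih _ (by omega)) (ih _ (by omega))
    · exact odd h (ih _ (by omega))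

theorem List.antitone_get_append {α : Type*} {p : α → Prop} {A C : List α}
    (hA : ∀ x ∈ A, p x) (hC : ∀ x ∈ C, ¬ p x) :
    Antitone fun i : Fin (A ++ C).length => p ((A ++ C).get i) := by
  intro i j hij hj
  have hjA : (j : ℕ) < A.length := by
    by_contra hjA
    rw [List.get_eq_getElem, List.getElem_append_right (not_lt.1 hjA)] at hj
    exact hC _ (List.getElem_mem _) hj
  rw [List.get_eq_getElem, List.getElem_append_left (lt_of_le_of_lt hij hjA)]
  exact hA _ (List.getElem_mem _)

def doubleParts (P : Multiset ℕ) : Multiset ℕ := P.map (2 * ·)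

theorem sum_doubleParts (P : Multiset ℕ) : (doubleParts P).sum = 2 * P.sum := by
  rw [doubleParts, Multiset.sum_map_mul_left, Multiset.map_id']

theorem one_notMem_doubleParts (P : Multiset ℕ) : 1 ∉ doubleParts P := by
  simp [doubleParts]

theorem doubleParts_injective : Function.Injective doubleParts :=
  Multiset.map_injective (mul_right_injective₀ two_ne_zero)

namespace ElementaryMove

variable {P Q : Multiset ℕ}

theorem symm (h : ElementaryMove P Q) : ElementaryMove Q P := by
  obtain ⟨k, h | h⟩ := h
  exacts [⟨k, .inr h⟩, ⟨k, .inl h⟩]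

theorem add_right (h : ElementaryMove P Q) (R : Multiset ℕ) :
    ElementaryMove (P + R) (Q + R) := by
  obtain ⟨k, h | h⟩ := h
  · exact ⟨k, .inl (by rw [add_right_comm, h, add_right_comm])⟩
  · exact ⟨k, .inr (by rw [add_right_comm, h, add_right_comm])⟩

theorem doubleParts (h : ElementaryMove P Q) :
    ElementaryMove (doubleParts P) (doubleParts Q) := by
  obtain ⟨k, h | h⟩ := h <;> refine ⟨k + 1, ?_⟩
  · left; simpa [_root_.doubleParts, pow_succ, mul_comm] using congrArg _root_.doubleParts h
  · right; simpa [_root_.doubleParts, pow_succ, mul_comm] using congrArg _root_.doubleParts h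

theorem merge_ones (X : Multiset ℕ) : ElementaryMove (X + {1} + {1}) (X + {2}) :=
  ⟨0, .inl (by
    simp only [pow_zero, zero_add, pow_one, Multiset.insert_eq_cons, ← Multiset.singleton_add]
    abel)⟩

end ElementaryMove

theorem isBinaryPartition_add {P Q : Multiset ℕ} :
    IsBinaryPartition (P + Q) ↔ IsBinaryPartition P ∧ IsBinaryPartition Q := by
  simp only [IsBinaryPartition, Multiset.mem_add, or_imp, forall_and]

theorem isBinaryPartition_singleton_one : IsBinaryPartition {1} := by
  simpa [IsBinaryPartition] using ⟨0, rfl⟩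

theorem isBinaryPartition_doubleParts {P : Multiset ℕ} :
    IsBinaryPartition (doubleParts P) ↔ IsBinaryPartition P := by
  simp only [IsBinaryPartition, doubleParts, Multiset.forall_mem_map_iff]
  refine forall₂_congr fun p _ =>
    ⟨fun ⟨k, hk⟩ => ?_, fun ⟨k, hk⟩ => ⟨k + 1, by rw [hk, pow_succ, mul_comm]⟩⟩
  cases k with
  | zero => omega
  | succ k => exact ⟨k, by rw [pow_succ] at hk; omega⟩

namespace IsBinaryPartition

variable {P : Multiset ℕ}

theorem eq_zero_of_sum_eq_zero (hP : IsBinaryPartition P) (h : P.sum = 0) : P = 0 :=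
  Multiset.eq_zero_of_forall_notMem fun p hp => by
    obtain ⟨k, rfl⟩ := hP p hp
    exact pow_ne_zero k two_ne_zero (Multiset.sum_eq_zero_iff.1 h _ hp)

theorem one_mem_of_odd_sum (hP : IsBinaryPartition P) (h : P.sum % 2 = 1) : 1 ∈ P := by
  by_contra h1
  refine absurd (Multiset.dvd_sum fun p hp => ?_) (Nat.two_dvd_ne_zero.2 h)
  obtain ⟨_ | k, rfl⟩ := hP p hp
  · exact absurd hp h1
  · exact dvd_pow_self 2 k.succ_ne_zero

theorem doubleParts_map_half (hP : IsBinaryPartition P) (h1 : 1 ∉ P) :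
    doubleParts (P.map (· / 2)) = P := by
  conv_rhs => rw [← Multiset.map_id P]
  refine (Multiset.map_map _ _ _).trans (Multiset.map_congr rfl fun p hp => ?_)
  obtain ⟨_ | k, rfl⟩ := hP p hp
  · exact absurd hp h1
  · simp [pow_succ]; ring

end IsBinaryPartition

namespace BinaryPartition

theorem exists_add_one_eq_iff {m : ℕ} {P : Multiset ℕ} :
    (∃ Q, (Q.sum = m ∧ IsBinaryPartition Q) ∧ Q + {1} = P) ↔
      P.sum = m + 1 ∧ IsBinaryPartition P ∧ 1 ∈ P := by
  constructor
  · rintro ⟨Q, ⟨rfl, hQ⟩, rfl⟩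
    simpa [isBinaryPartition_add] using ⟨hQ, isBinaryPartition_singleton_one⟩
  · rintro ⟨hs, hP, h1⟩
    have hP' : P.erase 1 + {1} = P := Multiset.add_singleton_eq_iff.2 ⟨h1, rfl⟩
    refine ⟨P.erase 1, ⟨?_, (isBinaryPartition_add.1 (hP'.symm ▸ hP)).1⟩, hP'⟩
    have := congrArg Multiset.sum hP'
    rw [Multiset.sum_add, Multiset.sum_singleton] at this
    omega

theorem exists_doubleParts_eq_iff {m : ℕ} {P : Multiset ℕ} :
    (∃ Q, (Q.sum = m ∧ IsBinaryPartition Q) ∧ doubleParts Q = P) ↔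
      P.sum = 2 * m ∧ IsBinaryPartition P ∧ 1 ∉ P := by
  constructor
  · rintro ⟨Q, ⟨rfl, hQ⟩, rfl⟩
    exact ⟨sum_doubleParts Q, isBinaryPartition_doubleParts.2 hQ, one_notMem_doubleParts Q⟩
  · rintro ⟨hs, hP, h1⟩
    have hP' := hP.doubleParts_map_half h1
    refine ⟨P.map (· / 2), ⟨?_, isBinaryPartition_doubleParts.1 (hP'.symm ▸ hP)⟩, hP'⟩
    have := sum_doubleParts (P.map (· / 2))
    rw [hP'] at this; omega

def grayList : ℕ → List (Multiset ℕ)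
  | 0 => [0]
  | n + 1 =>
    (grayList n).map (· + {1}) ++
      if n % 2 = 0 then []
      else if (n + 1) / 2 % 2 = 0 then (grayList ((n + 1) / 2)).map doubleParts
      else ((grayList ((n + 1) / 2)).map doubleParts).reverse
decreasing_by all_goals omega

def grayLast : ℕ → Multiset ℕ
  | 0 => 0
  | n + 1 =>
    if n % 2 = 0 then grayLast n + {1}
    else if (n + 1) / 2 % 2 = 0 then doubleParts (grayLast ((n + 1) / 2))
    else Multiset.replicate ((n + 1) / 2) 2
decreasing_by all_goals omega

theorem grayList_zero : grayList 0 = [0] := by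
  rw [grayList]

theorem grayList_two_mul_add_one (h : ℕ) :
    grayList (2 * h + 1) = (grayList (2 * h)).map (· + {1}) := by
  rw [grayList]; simp

theorem grayList_two_mul_add_two (h : ℕ) :
    grayList (2 * h + 2) = (grayList (2 * h + 1)).map (· + {1}) ++
      if (h + 1) % 2 = 0 then (grayList (h + 1)).map doubleParts
      else ((grayList (h + 1)).map doubleParts).reverse := by
  rw [grayList, if_neg (by omega), show (2 * h + 1 + 1) / 2 = h + 1 by omega]

theorem grayLast_two_mul_add_one (h : ℕ) : grayLast (2 * h + 1) = grayLast (2 * h) + {1} := by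
  rw [grayLast]; simp

theorem grayLast_two_mul (h : ℕ) :
    grayLast (2 * h) =
      if h % 2 = 0 then doubleParts (grayLast h) else Multiset.replicate h 2 := by
  cases h with
  | zero => simp [grayLast, doubleParts]
  | succ h => rw [show 2 * (h + 1) = 2 * h + 1 + 1 by ring, grayLast, if_neg (by omega),
      show (2 * h + 1 + 1) / 2 = h + 1 by omega]

theorem mem_grayList_iff (n : ℕ) (P : Multiset ℕ) :
    P ∈ grayList n ↔ P.sum = n ∧ IsBinaryPartition P := by
  induction n using Nat.induction_pred_half generalizing P with
  | zero =>
    rw [grayList_zero, List.mem_singleton]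
    exact ⟨by rintro rfl; simp [IsBinaryPartition],
      fun ⟨hs, hP⟩ => hP.eq_zero_of_sum_eq_zero hs⟩
  | odd h ih =>
    simp only [grayList_two_mul_add_one, List.mem_map, ih, exists_add_one_eq_iff]
    exact ⟨fun ⟨hs, hP, _⟩ => ⟨hs, hP⟩,
      fun ⟨hs, hP⟩ => ⟨hs, hP, hP.one_mem_of_odd_sum (by omega)⟩⟩
  | even h ih ih' =>
    have hB : P ∈ (grayList (h + 1)).map doubleParts ↔
        P.sum = 2 * h + 2 ∧ IsBinaryPartition P ∧ 1 ∉ P := by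
      simp only [List.mem_map, ih', exists_doubleParts_eq_iff, mul_add, mul_one]
    rw [grayList_two_mul_add_two, List.mem_append, apply_ite (P ∈ ·), List.mem_reverse, ite_self,
      hB, List.mem_map]
    simp only [ih, exists_add_one_eq_iff]
    tauto

theorem nodup_grayList (n : ℕ) : (grayList n).Nodup := by
  induction n using Nat.induction_pred_half with
  | zero => simp [grayList_zero]
  | odd h ih => rw [grayList_two_mul_add_one]; exact ih.map (add_left_injective _)
  | even h ih ih' =>
    rw [grayList_two_mul_add_two]
    refine (ih.map (add_left_injective _)).append ?_ ?_
    · have := ih'.map doubleParts_injective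
      split_ifs
      exacts [this, List.nodup_reverse.2 this]
    · intro P hA hB
      obtain ⟨Q, -, rfl⟩ := List.mem_map.1 hA
      rw [apply_ite (_ ∈ ·), List.mem_reverse, ite_self] at hB
      obtain ⟨R, -, hR⟩ := List.mem_map.1 hB
      exact one_notMem_doubleParts R (hR ▸ by simp)

theorem head?_grayList (n : ℕ) : (grayList n).head? = some (Multiset.replicate n 1) := by
  induction n using Nat.induction_pred_half with
  | zero => simp [grayList_zero]
  | odd h ih => simp [grayList_two_mul_add_one, ih, ← Multiset.cons_zero, Multiset.add_cons]
  | even h ih _ =>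
    simp [grayList_two_mul_add_two, List.head?_append, ih, ← Multiset.cons_zero,
      Multiset.add_cons]

theorem getLast?_grayList (n : ℕ) : (grayList n).getLast? = some (grayLast n) := by
  induction n using Nat.induction_pred_half with
  | zero => simp [grayList_zero, grayLast]
  | odd h ih => simp [grayList_two_mul_add_one, grayLast_two_mul_add_one, ih]
  | even h ih ih' =>
    rw [grayList_two_mul_add_two, List.getLast?_append, show 2 * h + 2 = 2 * (h + 1) by ring,
      grayLast_two_mul]
    split_ifs
    · simp [ih']
    · simp [head?_grayList, doubleParts]

theorem isChain_grayList (n : ℕ) : (grayList n).IsChain ElementaryMove := by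
  induction n using Nat.induction_pred_half with
  | zero => simp [grayList_zero]
  | odd h ih =>
    rw [grayList_two_mul_add_one]
    exact (List.isChain_map _).2 (ih.imp fun _ _ hm => hm.add_right _)
  | even h ih ih' =>
    have hB := (List.isChain_map doubleParts).2 (ih'.imp fun _ _ hm => hm.doubleParts)
    rw [grayList_two_mul_add_two, List.isChain_append]
    refine ⟨(List.isChain_map _).2 (ih.imp fun _ _ hm => hm.add_right _), ?_, ?_⟩
    · split_ifs
      exacts [hB, List.isChain_reverse.2 (hB.imp fun _ _ hm => hm.symm)]
    · rw [List.getLast?_map, getLast?_grayList, grayLast_two_mul_add_one, grayLast_two_mul]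
      simp only [Option.map_some, Option.mem_def, Option.some_inj, forall_eq']
      obtain ⟨k, rfl | rfl⟩ := Nat.even_or_odd' h
      · rw [if_neg (show (2 * k + 1) % 2 ≠ 0 by omega), if_pos (show 2 * k % 2 = 0 by omega),
          List.head?_reverse, List.getLast?_map, getLast?_grayList,
          grayLast_two_mul_add_one]
        simp only [Option.map_some, Option.some_inj, forall_eq']
        convert ElementaryMove.merge_ones (doubleParts (grayLast (2 * k))) using 1
        simp [doubleParts]
      · rw [if_pos (show (2 * k + 1 + 1) % 2 = 0 by omega),
          if_neg (show (2 * k + 1) % 2 ≠ 0 by omega), List.head?_map, head?_grayList]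
        simp only [Option.map_some, Option.some_inj, forall_eq']
        convert ElementaryMove.merge_ones (Multiset.replicate (2 * k + 1) 2) using 1
        rw [doubleParts, Multiset.map_replicate, Multiset.replicate_add, Multiset.replicate_one]

theorem grayList_eq_append (n : ℕ) :
    ∃ A C, grayList n = A ++ C ∧ (∀ P ∈ A, 1 ∈ P) ∧ ∀ P ∈ C, 1 ∉ P := by
  cases n with
  | zero => exact ⟨[], [0], by simp [grayList_zero], by simp, by simp⟩
  | succ n =>
    refine ⟨_, _, by rw [grayList], ?_, ?_⟩
    · simp
    · split_ifs <;> simp [one_notMem_doubleParts]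

end BinaryPartition

open BinaryPartition in
theorem gray_sequence_with_ones_first_general (n : ℕ) :
    ∃ L : List (Multiset ℕ),
      L.Nodup ∧
      (∀ P : Multiset ℕ, P ∈ L ↔ P.sum = n ∧ IsBinaryPartition P) ∧
      L.Chain' ElementaryMove ∧
      L.head? = some (Multiset.replicate n 1) ∧
      (∀ i j : Fin L.length, i ≤ j → (1 : ℕ) ∈ L.get j → (1 : ℕ) ∈ L.get i) := by
  refine ⟨grayList n, nodup_grayList n, mem_grayList_iff n, isChain_grayList n,
    head?_grayList n, ?_⟩
  obtain ⟨A, C, hAC, hA, hC⟩ := grayList_eq_append n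
  rw [hAC]
  exact List.antitone_get_append hA hC

theorem gray_sequence_with_ones_first (n : ℕ) (hn : 0 < n) :
    ∃ L : List (Multiset ℕ),
      L.Nodup ∧
      (∀ P : Multiset ℕ, P ∈ L ↔ P.sum = n ∧ IsBinaryPartition P) ∧
      L.Chain' ElementaryMove ∧
      L.head? = some (Multiset.replicate n 1) ∧
      (∀ i j : Fin L.length, i ≤ j → (1 : ℕ) ∈ L.get j → (1 : ℕ) ∈ L.get i) :=
  gray_sequence_with_ones_first_general n
end

section
/- There exists a bijection B from the positive integers onto the set of all even binary partitions such that B_1 is the empty partition, the sums |B_k| are nondecreasing, each B_{k+1} is obtained from B_k either by an elementary move or by adding a single new part equal to 2, and moreover every elementary-move transition involves one of the two largest part sizes: if B_{k+1} is obtained from B_k by merging two copies of 2^j into 2^{j+1}, then 2^j is the largest or second-largest distinct part size occurring in B_k, and if B_{k+1} is obtained from B_k by splitting a part 2^{j+1} into two copies of 2^j, then 2^{j+1} is the largest or second-largest distinct part size occurring in B_k. -/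
/-!
Partitions of sum `2 m` correspond bijectively to those of sum at most `m`: halve the parts other
than `2` and forget the `2`s; conversely `Q ↦ 2 Q + 2 + ⋯ + 2`. So all partitions of sum at most
`2 n` are listed recursively, the block of sum `2 m` being the image of the list for sum at most
`m`, reversed when `m` is odd. Under this map, adding a `2` to a partition with all parts equal
becomes merging two `2`s into a `4`, and a move among the two largest sizes stays one; consecutive
blocks are joined by adding a `2` to a partition with all parts equal.
-/

/-- An even binary partition: a multiset of parts, each a power of two that is at least 2. -/
def IsEvenBinaryPartition (P : Multiset ℕ) : Prop := ∀ p ∈ P, ∃ k : ℕ, 1 ≤ k ∧ p = 2 ^ k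

/-- `P` and `Q` differ by an elementary move with `k ≥ 1`: `Q` is obtained from `P`
by removing two copies of `2^k` and adding one copy of `2^(k+1)`, or vice versa. -/
def EvenElementaryMove (P Q : Multiset ℕ) : Prop :=
  ∃ k : ℕ, 1 ≤ k ∧
    (Q + {2 ^ k, 2 ^ k} = P + {2 ^ (k + 1)} ∨ P + {2 ^ k, 2 ^ k} = Q + {2 ^ (k + 1)})

/-- `v` is the largest or second-largest distinct part size occurring in `P`:
`v` occurs in `P` and at most one distinct size larger than `v` occurs in `P`. -/
def InTopTwoSizes (P : Multiset ℕ) (v : ℕ) : Prop :=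
  v ∈ P ∧ ∀ p ∈ P, ∀ q ∈ P, v < p → v < q → p = q

def AllPartsEqual (P : Multiset ℕ) : Prop := ∀ a ∈ P, ∀ b ∈ P, a = b

lemma allPartsEqual_replicate (n a : ℕ) : AllPartsEqual (Multiset.replicate n a) :=
  fun _ hx _ hy => (Multiset.eq_of_mem_replicate hx).trans (Multiset.eq_of_mem_replicate hy).symm

lemma AllPartsEqual.map {Q : Multiset ℕ} (h : AllPartsEqual Q) (f : ℕ → ℕ) :
    AllPartsEqual (Q.map f) := by
  intro x hx y hy
  obtain ⟨a, ha, rfl⟩ := Multiset.mem_map.mp hx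
  obtain ⟨b, hb, rfl⟩ := Multiset.mem_map.mp hy
  rw [h a ha b hb]

lemma AllPartsEqual.inTopTwoSizes_add_singleton {Q : Multiset ℕ} (h : AllPartsEqual Q) (v : ℕ) :
    InTopTwoSizes (Q + {v}) v := by
  refine ⟨by simp, fun p hp q hq hvp hvq => h p ?_ q ?_⟩
  · simpa [hvp.ne'] using hp
  · simpa [hvq.ne'] using hq

lemma IsEvenBinaryPartition.two_dvd_sum {P : Multiset ℕ} (hP : IsEvenBinaryPartition P) :
    2 ∣ P.sum :=
  Multiset.dvd_sum fun p hp => by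
    obtain ⟨k, hk, rfl⟩ := hP p hp
    exact dvd_pow_self 2 (by omega)

lemma sum_map_two_mul (Q : Multiset ℕ) : (Q.map (2 * ·)).sum = 2 * Q.sum := by
  simpa using Multiset.sum_map_mul_left (s := Q) (f := id) (a := 2)

def doublePad (n : ℕ) (Q : Multiset ℕ) : Multiset ℕ :=
  Q.map (2 * ·) + Multiset.replicate (n - Q.sum) 2

lemma sum_doublePad {n : ℕ} {Q : Multiset ℕ} (h : Q.sum ≤ n) : (doublePad n Q).sum = 2 * n := by
  simp only [doublePad, Multiset.sum_add, sum_map_two_mul, Multiset.sum_replicate, smul_eq_mul]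
  omega

lemma doublePad_zero (n : ℕ) : doublePad n 0 = Multiset.replicate n 2 := by
  simp [doublePad]

lemma doublePad_of_sum_eq {n : ℕ} {Q : Multiset ℕ} (h : Q.sum = n) :
    doublePad n Q = Q.map (2 * ·) := by
  simp [doublePad, h]

lemma doublePad_succ {n : ℕ} {Q : Multiset ℕ} (h : Q.sum ≤ n) :
    doublePad (n + 1) Q = doublePad n Q + {2} := by
  rw [doublePad, doublePad, Nat.sub_add_comm h, Multiset.replicate_succ, add_assoc,
    ← Multiset.singleton_add, add_comm {2}]

lemma doublePad_add_map {n : ℕ} {P Q X Y : Multiset ℕ} (h : Q + X = P + Y) (hs : Q.sum = P.sum) :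
    doublePad n Q + X.map (2 * ·) = doublePad n P + Y.map (2 * ·) := by
  rw [doublePad, doublePad, hs, add_right_comm, ← Multiset.map_add, h, Multiset.map_add,
    add_right_comm]

lemma doublePad_add_add_replicate {n : ℕ} {Q X : Multiset ℕ} (h : Q.sum + X.sum ≤ n) :
    doublePad n (Q + X) + Multiset.replicate X.sum 2 = doublePad n Q + X.map (2 * ·) := by
  rw [doublePad, doublePad, Multiset.map_add, Multiset.sum_add, add_assoc,
    ← Multiset.replicate_add, Nat.sub_add_eq, Nat.sub_add_cancel (by omega), add_right_comm]

lemma isEvenBinaryPartition_doublePad {Q : Multiset ℕ} (hQ : IsEvenBinaryPartition Q) (n : ℕ) :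
    IsEvenBinaryPartition (doublePad n Q) := by
  intro p hp
  rcases Multiset.mem_add.mp hp with hp | hp
  · obtain ⟨x, hx, rfl⟩ := Multiset.mem_map.mp hp
    obtain ⟨k, hk, rfl⟩ := hQ x hx
    exact ⟨k + 1, by omega, (pow_succ' 2 k).symm⟩
  · exact ⟨1, le_rfl, Multiset.eq_of_mem_replicate hp⟩

lemma IsEvenBinaryPartition.filter_ne_two_doublePad {Q : Multiset ℕ}
    (hQ : IsEvenBinaryPartition Q) (n : ℕ) :
    (doublePad n Q).filter (· ≠ 2) = Q.map (2 * ·) := by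
  rw [doublePad, Multiset.filter_add, Multiset.filter_eq_self.mpr, Multiset.filter_eq_nil.mpr,
    add_zero]
  · exact fun a ha => by simp [Multiset.eq_of_mem_replicate ha]
  · intro a ha
    obtain ⟨x, hx, rfl⟩ := Multiset.mem_map.mp ha
    obtain ⟨k, hk, rfl⟩ := hQ x hx
    have : 2 ≤ 2 ^ k := Nat.le_self_pow (by omega) 2
    omega

lemma doublePad_injOn (n : ℕ) : Set.InjOn (doublePad n) {Q | IsEvenBinaryPartition Q} := by
  intro Q hQ Q' hQ' h
  have := congrArg (Multiset.filter (· ≠ 2)) h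
  rw [hQ.filter_ne_two_doublePad, hQ'.filter_ne_two_doublePad] at this
  exact Multiset.map_injective (fun a b hab => by simpa using hab) this

lemma inTopTwoSizes_doublePad {Q : Multiset ℕ} {v : ℕ} (h : InTopTwoSizes Q v) (hv : 0 < v)
    (n : ℕ) : InTopTwoSizes (doublePad n Q) (2 * v) := by
  refine ⟨Multiset.mem_add.mpr (Or.inl (Multiset.mem_map_of_mem _ h.1)), ?_⟩
  intro p hp q hq hvp hvq
  rcases Multiset.mem_add.mp hp with hp | hp
  · rcases Multiset.mem_add.mp hq with hq | hq
    · obtain ⟨a, ha, rfl⟩ := Multiset.mem_map.mp hp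
      obtain ⟨b, hb, rfl⟩ := Multiset.mem_map.mp hq
      rw [h.2 a ha b hb (by omega) (by omega)]
    · have := Multiset.eq_of_mem_replicate hq; omega
  · have := Multiset.eq_of_mem_replicate hp; omega

lemma AllPartsEqual.inTopTwoSizes_two_doublePad {n : ℕ} {Q : Multiset ℕ} (h : AllPartsEqual Q)
    (hn : Q.sum < n) : InTopTwoSizes (doublePad n Q) 2 := by
  refine ⟨Multiset.mem_add.mpr (Or.inr (Multiset.mem_replicate.mpr ⟨by omega, rfl⟩)), ?_⟩
  intro p hp q hq hp2 hq2
  rcases Multiset.mem_add.mp hp with hp | hp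
  · rcases Multiset.mem_add.mp hq with hq | hq
    · exact h.map _ p hp q hq
    · have := Multiset.eq_of_mem_replicate hq; omega
  · have := Multiset.eq_of_mem_replicate hp; omega

/-- Both ends are constrained so that reversing a list of such moves gives such moves again. -/
def TopMerge (P Q : Multiset ℕ) (j : ℕ) : Prop :=
  Q + {2 ^ j, 2 ^ j} = P + {2 ^ (j + 1)} ∧
    InTopTwoSizes P (2 ^ j) ∧ InTopTwoSizes Q (2 ^ (j + 1))

def TopMove (P Q : Multiset ℕ) : Prop :=
  ∃ j, 1 ≤ j ∧ (TopMerge P Q j ∨ TopMerge Q P j)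

lemma TopMove.symm {P Q : Multiset ℕ} (h : TopMove P Q) : TopMove Q P :=
  let ⟨j, hj, h⟩ := h
  ⟨j, hj, h.symm⟩

def GrayStep (P Q : Multiset ℕ) : Prop :=
  (Q = P + {2} ∧ AllPartsEqual P) ∨ TopMove P Q

lemma sum_eq_of_merge {P Q : Multiset ℕ} {j : ℕ} (h : Q + {2 ^ j, 2 ^ j} = P + {2 ^ (j + 1)}) :
    Q.sum = P.sum := by
  have := congrArg Multiset.sum h
  simp only [Multiset.sum_add, Multiset.insert_eq_cons, Multiset.sum_cons,
    Multiset.sum_singleton, pow_succ] at this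
  omega

lemma card_add_one_of_merge {P Q : Multiset ℕ} {a b : ℕ} (h : Q + {a, a} = P + {b}) :
    Q.card + 1 = P.card := by
  have := congrArg Multiset.card h
  simp only [Multiset.card_add, Multiset.insert_eq_cons, Multiset.card_cons,
    Multiset.card_singleton] at this
  omega

lemma exponent_eq_of_merge {P Q : Multiset ℕ} {i j : ℕ}
    (hi : Q + {2 ^ i, 2 ^ i} = P + {2 ^ (i + 1)}) (hj : Q + {2 ^ j, 2 ^ j} = P + {2 ^ (j + 1)}) :
    i = j := by
  have key : Q + ({2 ^ i, 2 ^ i} + {2 ^ (j + 1)}) = Q + ({2 ^ j, 2 ^ j} + {2 ^ (i + 1)}) := by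
    rw [← add_assoc, hi, ← add_assoc, hj, add_right_comm]
  have hmem : 2 ^ i ∈ ({2 ^ j, 2 ^ j} + {2 ^ (i + 1)} : Multiset ℕ) := by
    rw [← add_left_cancel key]
    simp
  simpa [pow_right_inj₀] using hmem

lemma GrayStep.sum_le {P Q : Multiset ℕ} (h : GrayStep P Q) : P.sum ≤ Q.sum := by
  rcases h with ⟨rfl, -⟩ | ⟨j, -, ⟨hj, -⟩ | ⟨hj, -⟩⟩
  · simp
  · exact (sum_eq_of_merge hj).ge
  · exact (sum_eq_of_merge hj).le

lemma GrayStep.evenElementaryMove_or_eq_add_two {P Q : Multiset ℕ} (h : GrayStep P Q) :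
    EvenElementaryMove P Q ∨ Q = P + {2} := by
  rcases h with ⟨h, -⟩ | ⟨j, hj, ⟨h, -⟩ | ⟨h, -⟩⟩
  · exact Or.inr h
  · exact Or.inl ⟨j, hj, Or.inl h⟩
  · exact Or.inl ⟨j, hj, Or.inr h⟩

lemma GrayStep.inTopTwoSizes_of_merge {P Q : Multiset ℕ} {j : ℕ} (h : GrayStep P Q)
    (hj : Q + {2 ^ j, 2 ^ j} = P + {2 ^ (j + 1)}) : InTopTwoSizes P (2 ^ j) := by
  have hcard := card_add_one_of_merge hj
  rcases h with ⟨rfl, -⟩ | ⟨i, -, ⟨hi, hP, -⟩ | ⟨hi, -⟩⟩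
  · rw [Multiset.card_add, Multiset.card_singleton] at hcard
    omega
  · rwa [exponent_eq_of_merge hj hi]
  · have := card_add_one_of_merge hi
    omega

lemma GrayStep.inTopTwoSizes_of_split {P Q : Multiset ℕ} {j : ℕ} (h : GrayStep P Q)
    (hj : Q + {2 ^ (j + 1)} = P + {2 ^ j, 2 ^ j}) : InTopTwoSizes P (2 ^ (j + 1)) := by
  rcases h with ⟨rfl, -⟩ | ⟨i, -, ⟨hi, -⟩ | ⟨hi, -, hP⟩⟩
  · have := sum_eq_of_merge hj.symm
    simp at this
  · have := card_add_one_of_merge hi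
    have := card_add_one_of_merge hj.symm
    omega
  · rwa [exponent_eq_of_merge hj.symm hi]

lemma topMerge_doublePad {P Q : Multiset ℕ} {j : ℕ} (h : TopMerge P Q j) (n : ℕ) :
    TopMerge (doublePad n P) (doublePad n Q) (j + 1) := by
  obtain ⟨he, hP, hQ⟩ := h
  refine ⟨?_, ?_, ?_⟩
  · simpa [pow_succ'] using doublePad_add_map (n := n) he (sum_eq_of_merge he)
  · simpa [pow_succ'] using inTopTwoSizes_doublePad hP (by positivity) n
  · simpa [pow_succ'] using inTopTwoSizes_doublePad hQ (by positivity) n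

lemma AllPartsEqual.topMerge_doublePad_add_two {n : ℕ} {Q : Multiset ℕ} (h : AllPartsEqual Q)
    (hn : Q.sum + 2 ≤ n) : TopMerge (doublePad n Q) (doublePad n (Q + {2})) 1 := by
  refine ⟨?_, h.inTopTwoSizes_two_doublePad (by omega), ?_⟩
  · simpa using doublePad_add_add_replicate (n := n) (X := {2}) (by simpa using hn)
  · simpa using inTopTwoSizes_doublePad (h.inTopTwoSizes_add_singleton 2) two_pos n

lemma GrayStep.topMove_doublePad {n : ℕ} {P Q : Multiset ℕ} (h : GrayStep P Q)
    (hQ : Q.sum ≤ n) : TopMove (doublePad n P) (doublePad n Q) := by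
  rcases h with ⟨rfl, hP⟩ | ⟨j, -, hPQ | hQP⟩
  · exact ⟨1, le_rfl, Or.inl (hP.topMerge_doublePad_add_two (by simpa using hQ))⟩
  · exact ⟨j + 1, by omega, Or.inl (topMerge_doublePad hPQ n)⟩
  · exact ⟨j + 1, by omega, Or.inr (topMerge_doublePad hQP n)⟩

def grayList : ℕ → List (Multiset ℕ)
  | 0 => [0]
  | n + 1 => grayList n ++
      (if (n + 1) % 2 = 1 then (grayList ((n + 1) / 2)).reverse
        else grayList ((n + 1) / 2)).map (doublePad (n + 1))
  decreasing_by all_goals omega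

/-- Reversal for odd `m` makes each block start by adding a `2` to the last partition of the
previous block. -/
def grayBlock (m : ℕ) : List (Multiset ℕ) :=
  (if m % 2 = 1 then (grayList (m / 2)).reverse else grayList (m / 2)).map (doublePad m)

lemma grayList_zero : grayList 0 = [0] := by
  rw [grayList]

lemma grayList_succ (n : ℕ) : grayList (n + 1) = grayList n ++ grayBlock (n + 1) := by
  rw [grayList, grayBlock]

lemma mem_grayBlock {m : ℕ} {P : Multiset ℕ} :
    P ∈ grayBlock m ↔ ∃ Q ∈ grayList (m / 2), doublePad m Q = P := by
  unfold grayBlock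
  split_ifs <;> simp

lemma head?_grayList (n : ℕ) : (grayList n).head? = some 0 := by
  induction n with
  | zero => rw [grayList_zero]; rfl
  | succ n ih => rw [grayList_succ, List.head?_append, ih]; rfl

lemma grayList_prefix {m n : ℕ} (h : m ≤ n) : grayList m <+: grayList n := by
  induction n, h using Nat.le_induction with
  | base => exact List.prefix_rfl
  | succ n _ ih => exact ih.trans (grayList_succ n ▸ List.prefix_append _ _)

lemma lt_length_grayList (n : ℕ) : n < (grayList n).length := by
  induction n with
  | zero => simp [grayList_zero]
  | succ n ih =>
    have : (grayList ((n + 1) / 2)).length ≠ 0 := by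
      simp [← List.head?_eq_none_iff, head?_grayList]
    rw [grayList_succ, List.length_append, grayBlock]
    split_ifs <;> simp only [List.length_map, List.length_reverse] <;> omega

lemma exists_map_two_mul_eq_filter_ne_two {P : Multiset ℕ} (hP : IsEvenBinaryPartition P) :
    ∃ Q, IsEvenBinaryPartition Q ∧ Q.map (2 * ·) = P.filter (· ≠ 2) := by
  have hbig : ∀ x ∈ P.filter (· ≠ 2), ∃ k, 1 ≤ k ∧ x = 2 ^ (k + 1) := by
    intro x hx
    obtain ⟨hxP, hx2⟩ := Multiset.mem_filter.mp hx
    obtain ⟨k, hk, rfl⟩ := hP x hxP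
    refine ⟨k - 1, ?_, by congr 1; omega⟩
    by_contra hk1
    exact hx2 (by rw [show k = 1 by omega, pow_one])
  refine ⟨(P.filter (· ≠ 2)).map (· / 2), ?_, ?_⟩
  · intro p hp
    obtain ⟨x, hx, rfl⟩ := Multiset.mem_map.mp hp
    obtain ⟨k, hk, rfl⟩ := hbig x hx
    exact ⟨k, hk, by rw [pow_succ, Nat.mul_div_cancel _ two_pos]⟩
  · rw [Multiset.map_map]
    refine (Multiset.map_congr rfl fun x hx => ?_).trans (Multiset.map_id _)
    obtain ⟨k, -, rfl⟩ := hbig x hx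
    simp [pow_succ, mul_comm]

lemma exists_doublePad_eq_iff {m : ℕ} {P : Multiset ℕ} :
    (∃ Q, IsEvenBinaryPartition Q ∧ Q.sum ≤ 2 * (m / 2) ∧ doublePad m Q = P) ↔
      IsEvenBinaryPartition P ∧ P.sum = 2 * m := by
  constructor
  · rintro ⟨Q, hQ, hsum, rfl⟩
    exact ⟨isEvenBinaryPartition_doublePad hQ m, sum_doublePad (by omega)⟩
  · rintro ⟨hP, hsum⟩
    obtain ⟨Q, hQ, hQP⟩ := exists_map_two_mul_eq_filter_ne_two hP
    have hsplit : P.filter (· ≠ 2) + Multiset.replicate (P.count 2) 2 = P := by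
      rw [← Multiset.filter_eq', add_comm]
      exact Multiset.filter_add_not _ P
    have hsums := congrArg Multiset.sum hsplit
    rw [Multiset.sum_add, ← hQP, sum_map_two_mul, Multiset.sum_replicate, smul_eq_mul] at hsums
    have := hQ.two_dvd_sum
    refine ⟨Q, hQ, by omega, ?_⟩
    rw [doublePad, hQP, show m - Q.sum = P.count 2 by omega, hsplit]

lemma IsEvenBinaryPartition.eq_zero_of_sum_eq_zero {P : Multiset ℕ}
    (hP : IsEvenBinaryPartition P) (h : P.sum = 0) : P = 0 :=
  Multiset.eq_zero_of_forall_notMem fun p hp => by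
    obtain ⟨k, -, rfl⟩ := hP p hp
    exact pow_ne_zero k two_ne_zero (Multiset.sum_eq_zero_iff.mp h _ hp)

lemma mem_grayList {n : ℕ} {P : Multiset ℕ} :
    P ∈ grayList n ↔ IsEvenBinaryPartition P ∧ P.sum ≤ 2 * n := by
  induction n using Nat.strong_induction_on generalizing P with
  | _ n ih =>
    cases n with
    | zero =>
      rw [grayList_zero, List.mem_singleton]
      constructor
      · rintro rfl
        exact ⟨fun p hp => by simp at hp, by simp⟩
      · rintro ⟨hP, h⟩
        exact hP.eq_zero_of_sum_eq_zero (by omega)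
    | succ n =>
      have hblock : P ∈ grayBlock (n + 1) ↔ IsEvenBinaryPartition P ∧ P.sum = 2 * (n + 1) := by
        rw [mem_grayBlock, ← exists_doublePad_eq_iff]
        simp only [ih _ (by omega : (n + 1) / 2 < n + 1), and_assoc]
      rw [grayList_succ, List.mem_append, ih n (by omega), hblock]
      constructor
      · rintro (⟨hP, h⟩ | ⟨hP, h⟩) <;> exact ⟨hP, by omega⟩
      · rintro ⟨hP, h⟩
        have := hP.two_dvd_sum
        by_cases h' : P.sum ≤ 2 * n
        · exact Or.inl ⟨hP, h'⟩
        · exact Or.inr ⟨hP, by omega⟩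

lemma nodup_grayList (n : ℕ) : (grayList n).Nodup := by
  induction n using Nat.strong_induction_on with
  | _ n ih =>
    cases n with
    | zero => simp [grayList_zero]
    | succ n =>
      rw [grayList_succ]
      refine (ih n (by omega)).append ?_ fun P hP hP' => ?_
      · have hsub := ih ((n + 1) / 2) (by omega)
        have hinj : Set.InjOn (doublePad (n + 1)) {Q | Q ∈ grayList ((n + 1) / 2)} :=
          (doublePad_injOn _).mono fun Q hQ => (mem_grayList.mp hQ).1
        unfold grayBlock
        split_ifs
        · refine (List.nodup_reverse.mpr hsub).map_on fun x hx y hy => ?_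
          exact hinj (List.mem_reverse.mp hx) (List.mem_reverse.mp hy)
        · exact hsub.map_on fun x hx y hy => hinj hx hy
      · obtain ⟨Q, hQ, rfl⟩ := mem_grayBlock.mp hP'
        have h1 := (mem_grayList.mp hP).2
        have h2 := (mem_grayList.mp hQ).2
        rw [sum_doublePad (by omega)] at h1
        omega

lemma getLast?_grayList (n : ℕ) :
    ∃ P, (grayList n).getLast? = some P ∧ AllPartsEqual P ∧ P.sum = 2 * n ∧
      (grayBlock (n + 1)).head? = some (P + {2}) := by
  induction n using Nat.strong_induction_on with
  | _ n ih =>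
    cases n with
    | zero =>
      exact ⟨0, by simp [grayList_zero], fun _ h => by simp at h, rfl,
        by simp [grayBlock, grayList_zero, doublePad]⟩
    | succ n =>
      rw [grayList_succ, List.getLast?_append]
      rcases Nat.mod_two_eq_zero_or_one (n + 1) with hev | hodd
      · obtain ⟨Q, hlast, hQ, hsum, -⟩ := ih ((n + 1) / 2) (by omega)
        have hQn : Q.sum = n + 1 := by omega
        refine ⟨doublePad (n + 1) Q, ?_, ?_, sum_doublePad hQn.le, ?_⟩
        · simp [grayBlock, hev, hlast]
        · rw [doublePad_of_sum_eq hQn]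
          exact hQ.map _
        · rw [grayBlock, if_pos (by omega), show (n + 1 + 1) / 2 = (n + 1) / 2 by omega]
          simp [hlast, doublePad_succ hQn.le]
      · refine ⟨Multiset.replicate (n + 1) 2, ?_, allPartsEqual_replicate _ _,
          by rw [Multiset.sum_replicate, smul_eq_mul, mul_comm], ?_⟩
        · simp [grayBlock, hodd, head?_grayList, doublePad_zero]
        · rw [grayBlock, if_neg (by omega), List.head?_map, head?_grayList, Option.map_some,
            doublePad_zero, Multiset.replicate_succ, ← Multiset.singleton_add, add_comm]

lemma isChain_topMove_grayBlock {m : ℕ} (h : (grayList (m / 2)).IsChain GrayStep) :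
    (grayBlock m).IsChain TopMove := by
  have hlift : (grayList (m / 2)).IsChain fun P Q => TopMove (doublePad m P) (doublePad m Q) :=
    h.imp_of_mem_imp fun P Q _ hQ hPQ => hPQ.topMove_doublePad (by
      have := (mem_grayList.mp hQ).2
      omega)
  unfold grayBlock
  split_ifs
  · rw [List.isChain_map, List.isChain_reverse]
    exact hlift.imp fun _ _ h => h.symm
  · rwa [List.isChain_map]

lemma isChain_grayList (n : ℕ) : (grayList n).IsChain GrayStep := by
  induction n using Nat.strong_induction_on with
  | _ n ih =>
    cases n with
    | zero => simp [grayList_zero]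
    | succ n =>
      rw [grayList_succ]
      refine (ih n (by omega)).append
        ((isChain_topMove_grayBlock (ih _ (by omega))).imp fun _ _ => Or.inr) ?_
      obtain ⟨P, hlast, hP, -, hhead⟩ := getLast?_grayList n
      simp only [hlast, hhead, Option.mem_def, Option.some.injEq, forall_eq']
      exact Or.inl ⟨rfl, hP⟩

def graySeq (k : ℕ) : Multiset ℕ := (grayList k)[k]'(lt_length_grayList k)

lemma getElem_grayList {n k : ℕ} (h : k < (grayList n).length) : (grayList n)[k] = graySeq k := by
  rcases le_total k n with hkn | hnk
  · exact ((grayList_prefix hkn).getElem (lt_length_grayList k)).symm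
  · exact (grayList_prefix hnk).getElem h

lemma graySeq_zero : graySeq 0 = 0 := by
  simp [graySeq, grayList_zero]

lemma graySeq_mem_grayList {k n : ℕ} (h : k ≤ n) : graySeq k ∈ grayList n := by
  have hk : k < (grayList n).length := (lt_length_grayList k).trans_le (grayList_prefix h).length_le
  exact getElem_grayList hk ▸ List.getElem_mem hk

lemma isEvenBinaryPartition_graySeq (k : ℕ) : IsEvenBinaryPartition (graySeq k) :=
  (mem_grayList.mp (graySeq_mem_grayList le_rfl)).1

lemma graySeq_injective : Function.Injective graySeq := by
  intro a b hab
  have ha : a < (grayList (max a b)).length :=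
    (lt_length_grayList a).trans_le (grayList_prefix (le_max_left a b)).length_le
  have hb : b < (grayList (max a b)).length :=
    (lt_length_grayList b).trans_le (grayList_prefix (le_max_right a b)).length_le
  rw [← getElem_grayList ha, ← getElem_grayList hb] at hab
  exact (nodup_grayList _).getElem_inj_iff.mp hab

lemma exists_graySeq_eq {P : Multiset ℕ} (hP : IsEvenBinaryPartition P) : ∃ k, graySeq k = P := by
  have hP' : P ∈ grayList P.sum := mem_grayList.mpr ⟨hP, by omega⟩
  obtain ⟨k, hk, hkP⟩ := List.mem_iff_getElem.mp hP'
  exact ⟨k, (getElem_grayList hk).symm.trans hkP⟩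

lemma grayStep_graySeq (k : ℕ) : GrayStep (graySeq k) (graySeq (k + 1)) := by
  have hk := lt_length_grayList (k + 1)
  have := List.isChain_iff_getElem.mp (isChain_grayList (k + 1)) k hk
  rwa [getElem_grayList, getElem_grayList] at this

theorem gray_sequence_top_two_sizes :
    ∃ B : ℕ+ → Multiset ℕ,
      (∀ k, IsEvenBinaryPartition (B k)) ∧
      Function.Injective B ∧
      (∀ P : Multiset ℕ, IsEvenBinaryPartition P → ∃ k, B k = P) ∧
      B 1 = 0 ∧
      Monotone (fun k => (B k).sum) ∧
      (∀ k, EvenElementaryMove (B k) (B (k + 1)) ∨ B (k + 1) = B k + {2}) ∧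
      (∀ k, ∀ j : ℕ, 1 ≤ j →
        -- merging two copies of 2^j of B k into one 2^(j+1)
        (B (k + 1) + {2 ^ j, 2 ^ j} = B k + {2 ^ (j + 1)} → InTopTwoSizes (B k) (2 ^ j)) ∧
        -- splitting one 2^(j+1) of B k into two copies of 2^j
        (B (k + 1) + {2 ^ (j + 1)} = B k + {2 ^ j, 2 ^ j} → InTopTwoSizes (B k) (2 ^ (j + 1)))) := by
  have hstep (k : ℕ+) : GrayStep (graySeq k.natPred) (graySeq (k + 1).natPred) := by
    have hsucc : (k + 1).natPred = k.natPred + 1 := by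
      simp only [PNat.natPred, PNat.add_coe, PNat.val_ofNat]
      have := k.pos
      omega
    exact hsucc ▸ grayStep_graySeq _
  refine ⟨fun k => graySeq k.natPred, fun k => isEvenBinaryPartition_graySeq _,
    graySeq_injective.comp PNat.natPred_injective, fun P hP => ?_, graySeq_zero,
    (monotone_nat_of_le_succ fun k => (grayStep_graySeq k).sum_le).comp PNat.natPred_monotone,
    fun k => (hstep k).evenElementaryMove_or_eq_add_two,
    fun k j _ => ⟨(hstep k).inTopTwoSizes_of_merge, (hstep k).inTopTwoSizes_of_split⟩⟩
  obtain ⟨k, rfl⟩ := exists_graySeq_eq hP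
  exact ⟨k.succPNat, congrArg graySeq (Nat.natPred_succPNat k)⟩
end
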